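/- Let A = {a,b,c} with independence graph a − b − c (a commutes with b, b commutes with c), and let B = {c}, Z = {a,b}. Then B is a transitively factorizing subalphabet, β_Z(B) = {b} ∪ {a·cⁿ : n ≥ 0}, and the induced independence relation θ_{β_Z(B)} consists exactly of the pairs {b, a·cⁿ} for n ≥ 0 (b commutes with a·cⁿ iff {b}×Alph(acⁿ) ⊆ θ, which holds for all n since (b,a)∈θ and (b,c)∈θ), and the submonoid generated by β_Z(B) is free partially commutative on this independence alphabet. -/

import Mathlib

namespace PCM

variable {A : Type*}

/-- Elementary commutation relation on words. -/
def TraceRel (θ : A → A → Prop) : FreeMonoid A → FreeMonoid A → Prop :=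
  fun x y => ∃ a b, θ a b ∧ x = FreeMonoid.of a * FreeMonoid.of b ∧
    y = FreeMonoid.of b * FreeMonoid.of a

/-- The congruence generated by the commutations. -/
def traceCon (θ : A → A → Prop) : Con (FreeMonoid A) := conGen (TraceRel θ)

/-- The free partially commutative (trace) monoid `M(A,θ)`. -/
abbrev Trace (A : Type*) (θ : A → A → Prop) := (traceCon θ).Quotient

/-- Canonical projection from words to traces. -/
def trMk (θ : A → A → Prop) : FreeMonoid A →* Trace A θ := (traceCon θ).mk'

/-- The trace of a single letter. -/
def trOf (θ : A → A → Prop) (a : A) : Trace A θ := trMk θ (FreeMonoid.of a)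

/-- `IA t` : the set of possible initial letters of a trace. -/
def IA (θ : A → A → Prop) (t : Trace A θ) : Set A := {a | ∃ w, t = trOf θ a * w}

/-- The alphabet of a trace. -/
def Alph (θ : A → A → Prop) (t : Trace A θ) : Set A :=
  {a | ∃ l : List A, trMk θ (FreeMonoid.ofList l) = t ∧ a ∈ l}

/-- The submonoid `M(B,θ_B)` generated by a subalphabet. -/
def subTr (θ : A → A → Prop) (B : Set A) : Submonoid (Trace A θ) :=
  Submonoid.closure (trOf θ '' B)

/-- `β_Z(B)` where `Z = A - B`. -/
def beta (θ : A → A → Prop) (B : Set A) : Set (Trace A θ) :=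
  {t | ∃ z, z ∉ B ∧ ∃ w ∈ subTr θ B, t = trOf θ z * w ∧ IA θ t = {z}}

/-- The induced independence relation `θ_X` on a set of traces. -/
def thetaX (θ : A → A → Prop) (X : Set (Trace A θ)) (x y : X) : Prop :=
  ∀ a ∈ Alph θ (x : Trace A θ), ∀ b ∈ Alph θ (y : Trace A θ), θ a b

/-- `X` is a partially commutative code : the canonical morphism from
`M(X,θ_X)` is injective. -/
def IsPCCode (θ : A → A → Prop) (X : Set (Trace A θ)) : Prop :=
  ∃ f : Trace X (thetaX θ X) →* Trace A θ,
    (∀ x : X, f (trOf (thetaX θ X) x) = (x : Trace A θ)) ∧ Function.Injective f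

/-- Dependence relation (edges of the dependence graph). -/
def dep (θ : A → A → Prop) (a b : A) : Prop := a ≠ b ∧ ¬ θ a b

/-- A path `z - b₁ - ⋯ - bₙ - z'` in the dependence graph with inner vertices in `B`. -/
def DepPathB (θ : A → A → Prop) (B : Set A) (z z' : A) : Prop :=
  ∃ l : List A, (∀ b ∈ l, b ∈ B) ∧ List.Chain (dep θ) z (l ++ [z'])

/-- `B` is a transitively factorizing subalphabet. -/
def IsTFSA (θ : A → A → Prop) (B : Set A) : Prop :=
  ∀ z z', z ∉ B → z' ∉ B → θ z z' → ¬ DepPathB θ B z z'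

end PCM

/-- The independence relation `a - b - c` on `{a,b,c} = {0,1,2}`. -/
def theta8 : Fin 3 → Fin 3 → Prop := fun x y =>
  (x = 0 ∧ y = 1) ∨ (x = 1 ∧ y = 0) ∨ (x = 1 ∧ y = 2) ∨ (x = 2 ∧ y = 1)


namespace Stmt8
open PCM

/-! ### General helpers for trace monoids -/

section Gen
variable {A : Type*} {θ : A → A → Prop}

/-- Lift a letter map respecting the commutations to a hom on the trace monoid. -/
def tlift {P : Type*} [Monoid P] (θ : A → A → Prop) (e : A → P)
    (he : ∀ a b, θ a b → e a * e b = e b * e a) : Trace A θ →* P :=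
  Con.lift _ (FreeMonoid.lift e) (Con.conGen_le.2 (by
    rintro x y ⟨a, b, hab, rfl, rfl⟩
    simp only [Con.ker_rel, map_mul, FreeMonoid.lift_eval_of]
    exact he a b hab))

@[simp] theorem tlift_of {P : Type*} [Monoid P] (θ : A → A → Prop) (e : A → P) (he) (a : A) :
    tlift θ e he (trOf θ a) = e a :=
  Con.lift_mk' _ _

theorem tlift_trMk {P : Type*} [Monoid P] (θ : A → A → Prop) (e : A → P) (he)
    (w : FreeMonoid A) : tlift θ e he (trMk θ w) = FreeMonoid.lift e w :=
  Con.lift_mk' _ _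

theorem hom_ext {P : Type*} [Monoid P] {F G : Trace A θ →* P}
    (h : ∀ a, F (trOf θ a) = G (trOf θ a)) : F = G := by
  have h2 : F.comp (trMk θ) = G.comp (trMk θ) := FreeMonoid.hom_eq h
  refine MonoidHom.ext fun t => ?_
  obtain ⟨w, rfl⟩ := Con.mk'_surjective (c := traceCon θ) t
  exact DFunLike.congr_fun h2 w

theorem comm_of {a b : A} (h : θ a b) :
    trOf θ a * trOf θ b = trOf θ b * trOf θ a := by
  rw [trOf, trOf, ← map_mul, ← map_mul]
  exact (Con.eq _).2 (ConGen.Rel.of _ _ ⟨a, b, h, rfl, rfl⟩)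

theorem of_pow (a : A) (n : ℕ) :
    (FreeMonoid.of a) ^ n = FreeMonoid.ofList (List.replicate n a) := by
  induction n with
  | zero => rfl
  | succ n ih => rw [pow_succ', ih, List.replicate_succ, FreeMonoid.ofList_cons]

end Gen

/-! ### The concrete model of `M({a,b,c}, a-b-c)` -/

abbrev M8 := FreeMonoid Bool × Multiplicative ℕ

def eA : Fin 3 → M8
  | 0 => (FreeMonoid.of false, 1)
  | 1 => (1, Multiplicative.ofAdd 1)
  | 2 => (FreeMonoid.of true, 1)

theorem he8 : ∀ a b, theta8 a b → eA a * eA b = eA b * eA a := by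
  rintro a b (⟨rfl, rfl⟩ | ⟨rfl, rfl⟩ | ⟨rfl, rfl⟩ | ⟨rfl, rfl⟩) <;>
    simp [eA, Prod.ext_iff]

def phiA : Trace (Fin 3) theta8 →* M8 := tlift theta8 eA he8

def b8 : Trace (Fin 3) theta8 := trOf theta8 1

def ac (n : ℕ) : Trace (Fin 3) theta8 := trOf theta8 0 * (trOf theta8 2) ^ n

theorem phiA_b : phiA b8 = (1, Multiplicative.ofAdd 1) := tlift_of _ _ _ _

theorem phiA_c_pow (n : ℕ) :
    phiA ((trOf theta8 2) ^ n) = ((FreeMonoid.of true) ^ n, 1) := by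
  rw [map_pow, phiA, tlift_of]
  simp [eA, Prod.pow_mk]

theorem phiA_ac (n : ℕ) :
    phiA (ac n) = (FreeMonoid.ofList (false :: List.replicate n true), 1) := by
  rw [ac, map_mul, phiA_c_pow, phiA, tlift_of, of_pow, FreeMonoid.ofList_cons]
  simp [eA, Prod.mk_mul_mk]

theorem b8_ne_ac (n : ℕ) : b8 ≠ ac n := by
  intro h
  have h2 : Multiplicative.toAdd (phiA b8).2 = Multiplicative.toAdd (phiA (ac n)).2 := by rw [h]
  rw [phiA_b, phiA_ac] at h2
  simp at h2

theorem ac_inj {m n : ℕ} (h : ac m = ac n) : m = n := by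
  have h2 : (FreeMonoid.toList (phiA (ac m)).1).length
      = (FreeMonoid.toList (phiA (ac n)).1).length := by rw [h]
  rw [phiA_ac, phiA_ac] at h2
  simpa using h2

/-! ### Counting letters -/

def cnt (i : Fin 3) : Trace (Fin 3) theta8 →* Multiplicative ℕ :=
  tlift theta8 (fun j => Multiplicative.ofAdd (if j = i then 1 else 0))
    (fun _ _ _ => mul_comm _ _)

theorem cnt_ofList (i : Fin 3) (l : List (Fin 3)) :
    cnt i (trMk theta8 (FreeMonoid.ofList l)) = Multiplicative.ofAdd (l.count i) := by
  rw [cnt, tlift_trMk]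
  induction l with
  | nil => rfl
  | cons x t ih =>
    rw [FreeMonoid.ofList_cons, map_mul, FreeMonoid.lift_eval_of, ih, List.count_cons]
    rw [← ofAdd_add, add_comm]
    simp

theorem cnt_b (i : Fin 3) : cnt i b8 = Multiplicative.ofAdd (if (1 : Fin 3) = i then 1 else 0) :=
  tlift_of _ _ _ _

theorem cnt_ac (i : Fin 3) (n : ℕ) :
    cnt i (ac n) =
      Multiplicative.ofAdd ((if (0 : Fin 3) = i then 1 else 0)
        + n * (if (2 : Fin 3) = i then 1 else 0)) := by
  rw [ac, map_mul, map_pow, cnt, tlift_of, tlift_of, ← ofAdd_nsmul, ← ofAdd_add]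
  simp

theorem fin3 : ∀ x : Fin 3, x = 0 ∨ x = 1 ∨ x = 2 := by decide

/-! ### Alphabets -/

theorem alph_b_sub : Alph theta8 b8 ⊆ {1} := by
  rintro x ⟨l, hl, hm⟩
  have hc : cnt x b8 = Multiplicative.ofAdd (l.count x) := by rw [← hl, cnt_ofList]
  rcases fin3 x with rfl | rfl | rfl
  · have hpos := List.count_pos_iff.2 hm
    rw [cnt_b] at hc
    have h3 := Multiplicative.ofAdd.injective hc
    simp at h3
    omega
  · rfl
  · have hpos := List.count_pos_iff.2 hm
    rw [cnt_b] at hc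
    have h3 := Multiplicative.ofAdd.injective hc
    simp at h3
    omega

theorem alph_ac_sub (n : ℕ) : Alph theta8 (ac n) ⊆ {0, 2} := by
  rintro x ⟨l, hl, hm⟩
  have hc : cnt x (ac n) = Multiplicative.ofAdd (l.count x) := by rw [← hl, cnt_ofList]
  rcases fin3 x with rfl | rfl | rfl
  · left; rfl
  · have hpos := List.count_pos_iff.2 hm
    rw [cnt_ac] at hc
    have h3 := Multiplicative.ofAdd.injective hc
    simp at h3
    omega
  · right; rfl

theorem one_mem_alph_b : (1 : Fin 3) ∈ Alph theta8 b8 :=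
  ⟨[1], rfl, by simp⟩

theorem zero_mem_alph_ac (n : ℕ) : (0 : Fin 3) ∈ Alph theta8 (ac n) := by
  refine ⟨0 :: List.replicate n 2, ?_, by simp⟩
  rw [FreeMonoid.ofList_cons, ← of_pow, map_mul, map_pow]
  rfl

/-! ### Initial alphabets -/

theorem IA_b : IA theta8 b8 = {1} := by
  ext x
  simp only [IA, Set.mem_setOf_eq, Set.mem_singleton_iff]
  constructor
  · rintro ⟨w, hw⟩
    rcases fin3 x with rfl | rfl | rfl
    · exfalso
      have h2 : FreeMonoid.toList (phiA b8).1
          = FreeMonoid.toList (phiA (trOf theta8 0 * w)).1 := by rw [← hw]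
      rw [phiA_b, map_mul] at h2
      simp only [phiA, tlift_of, eA, Prod.fst_mul, FreeMonoid.toList_mul] at h2
      simp [FreeMonoid.toList_one] at h2
    · rfl
    · exfalso
      have h2 : FreeMonoid.toList (phiA b8).1
          = FreeMonoid.toList (phiA (trOf theta8 2 * w)).1 := by rw [← hw]
      rw [phiA_b, map_mul] at h2
      simp only [phiA, tlift_of, eA, Prod.fst_mul, FreeMonoid.toList_mul] at h2
      simp [FreeMonoid.toList_one] at h2
  · rintro rfl
    exact ⟨1, (mul_one _).symm⟩

theorem IA_ac (n : ℕ) : IA theta8 (ac n) = {0} := by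
  ext x
  simp only [IA, Set.mem_setOf_eq, Set.mem_singleton_iff]
  constructor
  · rintro ⟨w, hw⟩
    rcases fin3 x with rfl | rfl | rfl
    · rfl
    · exfalso
      have h2 : Multiplicative.toAdd (phiA (ac n)).2
          = Multiplicative.toAdd (phiA (trOf theta8 1 * w)).2 := by rw [← hw]
      rw [phiA_ac, map_mul] at h2
      simp only [phiA, tlift_of, eA, Prod.snd_mul] at h2
      simp at h2
      omega
    · exfalso
      have h2 : FreeMonoid.toList (phiA (ac n)).1
          = FreeMonoid.toList (phiA (trOf theta8 2 * w)).1 := by rw [← hw]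
      rw [phiA_ac, map_mul] at h2
      simp only [phiA, tlift_of, eA, Prod.fst_mul, FreeMonoid.toList_mul] at h2
      simp at h2
  · rintro rfl
    exact ⟨(trOf theta8 2) ^ n, rfl⟩

/-! ### `β_Z(B)` -/

theorem hbeta : beta theta8 {2} =
    {b8} ∪ {t | ∃ n : ℕ, t = trOf theta8 0 * (trOf theta8 2) ^ n} := by
  ext t
  constructor
  · rintro ⟨z, hz, w, hw, rfl, hIA⟩
    rw [subTr, Set.image_singleton, Submonoid.mem_closure_singleton] at hw
    obtain ⟨n, rfl⟩ := hw
    rcases fin3 z with rfl | rfl | rfl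
    · exact Or.inr ⟨n, rfl⟩
    · cases n with
      | zero => exact Or.inl (by simp [b8])
      | succ k =>
        exfalso
        have h2 : (2 : Fin 3) ∈ IA theta8 (trOf theta8 1 * (trOf theta8 2) ^ (k + 1)) := by
          refine ⟨trOf theta8 1 * (trOf theta8 2) ^ k, ?_⟩
          rw [pow_succ', ← mul_assoc, comm_of (show theta8 1 2 by simp [theta8]), mul_assoc]
        rw [hIA] at h2
        simp at h2
    · exact absurd rfl hz
  · intro h
    rcases h with h | ⟨n, rfl⟩
    · rw [Set.mem_singleton_iff] at h
      subst h
      exact ⟨1, by simp, 1, one_mem _, (mul_one _).symm, IA_b⟩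
    · refine ⟨0, by simp, (trOf theta8 2) ^ n, ?_, rfl, IA_ac n⟩
      rw [subTr, Set.image_singleton]
      exact Submonoid.mem_closure_singleton.2 ⟨n, rfl⟩

theorem mem_cases {x : Trace (Fin 3) theta8} (hx : x ∈ beta theta8 {2}) :
    x = b8 ∨ ∃ n : ℕ, x = ac n := by
  rw [hbeta] at hx
  simpa [b8, ac] using hx

theorem b8_mem : b8 ∈ beta theta8 {2} := by rw [hbeta]; exact Or.inl rfl

theorem ac_mem (n : ℕ) : ac n ∈ beta theta8 {2} := by rw [hbeta]; exact Or.inr ⟨n, rfl⟩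

/-! ### TFSA -/

theorem tfsa : IsTFSA theta8 {2} := by
  rintro z z' hz hz' hθ ⟨l, hl, hchain⟩
  have hz2 : z ≠ 2 := fun h => hz (by simp [h])
  have hz2' : z' ≠ 2 := fun h => hz' (by simp [h])
  match l, hl, hchain with
  | [], _, hchain =>
    unfold List.Chain at hchain; rw [List.nil_append, List.chain_cons] at hchain
    exact hchain.1.2 hθ
  | [x], hl, hchain =>
    have hx : x = 2 := hl x (by simp)
    subst hx
    unfold List.Chain at hchain; rw [List.cons_append, List.nil_append, List.chain_cons, List.chain_cons] at hchain
    obtain ⟨⟨_, hn1⟩, ⟨_, hn2⟩, -⟩ := hchain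
    rcases hθ with ⟨rfl, rfl⟩ | ⟨rfl, rfl⟩ | ⟨rfl, rfl⟩ | ⟨rfl, rfl⟩
    · exact hn2 (by simp [theta8])
    · exact hn1 (by simp [theta8])
    · exact hz2' rfl
    · exact hz2 rfl
  | x :: y :: rest, hl, hchain =>
    have hx : x = 2 := hl x (by simp)
    have hy : y = 2 := hl y (by simp)
    subst hx; subst hy
    unfold List.Chain at hchain; rw [List.cons_append, List.cons_append, List.chain_cons, List.chain_cons] at hchain
    exact hchain.2.1.1 rfl

/-! ### Commutations -/

theorem thetaX_b_ac (n : ℕ) :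
    ∀ a ∈ Alph theta8 b8, ∀ b ∈ Alph theta8 (ac n), theta8 a b := by
  intro a ha b hb
  have h1 : a = 1 := alph_b_sub ha
  rcases alph_ac_sub n hb with h2 | h2 <;> subst h1 <;> subst h2 <;> simp [theta8]

theorem thetaX_ac_b (n : ℕ) :
    ∀ a ∈ Alph theta8 (ac n), ∀ b ∈ Alph theta8 b8, theta8 a b := by
  intro a ha b hb
  have h1 : b = 1 := alph_b_sub hb
  rcases alph_ac_sub n ha with h2 | h2 <;> subst h1 <;> subst h2 <;> simp [theta8]

theorem not_theta8_one_one : ¬ theta8 1 1 := by simp [theta8]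

theorem not_theta8_zero_zero : ¬ theta8 0 0 := by simp [theta8]

theorem thetaX_iff :
    ∀ x ∈ beta theta8 {2}, ∀ y ∈ beta theta8 {2},
      ((∀ a ∈ Alph theta8 x, ∀ b ∈ Alph theta8 y, theta8 a b) ↔
        ((x = trOf theta8 1 ∧ ∃ n : ℕ, y = trOf theta8 0 * (trOf theta8 2) ^ n) ∨
         (y = trOf theta8 1 ∧ ∃ n : ℕ, x = trOf theta8 0 * (trOf theta8 2) ^ n))) := by
  intro x hx y hy
  rcases mem_cases hx with rfl | ⟨m, rfl⟩ <;> rcases mem_cases hy with rfl | ⟨n, rfl⟩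
  · constructor
    · intro h
      exact absurd (h 1 one_mem_alph_b 1 one_mem_alph_b) not_theta8_one_one
    · rintro (⟨-, n, h2⟩ | ⟨-, n, h2⟩) <;> exact absurd h2 (b8_ne_ac n)
  · exact iff_of_true (thetaX_b_ac n) (Or.inl ⟨rfl, n, rfl⟩)
  · exact iff_of_true (thetaX_ac_b m) (Or.inr ⟨rfl, m, rfl⟩)
  · constructor
    · intro h
      exact absurd (h 0 (zero_mem_alph_ac m) 0 (zero_mem_alph_ac n)) not_theta8_zero_zero
    · rintro (⟨h1, -⟩ | ⟨h1, -⟩)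
      · exact absurd h1.symm (b8_ne_ac m)
      · exact absurd h1.symm (b8_ne_ac n)

/-! ### The partially commutative code property -/

abbrev X8 : Set (Trace (Fin 3) theta8) := beta theta8 {2}

abbrev tX8 : X8 → X8 → Prop := thetaX theta8 X8

theorem comm_b8_ac (n : ℕ) : Commute b8 (ac n) := by
  have h10 : Commute (trOf theta8 1) (trOf theta8 0) :=
    comm_of (show theta8 1 0 by simp [theta8])
  have h12 : Commute (trOf theta8 1) (trOf theta8 2) :=
    comm_of (show theta8 1 2 by simp [theta8])
  exact h10.mul_right (h12.pow_right n)

def f8 : Trace X8 tX8 →* Trace (Fin 3) theta8 :=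
  tlift tX8 (fun x => (x : Trace (Fin 3) theta8)) (by
    intro x y hxy
    rcases mem_cases x.2 with hx | ⟨m, hx⟩ <;> rcases mem_cases y.2 with hy | ⟨n, hy⟩
    · exact absurd (hxy 1 (by rw [hx]; exact one_mem_alph_b)
        1 (by rw [hy]; exact one_mem_alph_b)) not_theta8_one_one
    · simp only [hx, hy]; exact comm_b8_ac n
    · simp only [hx, hy]; exact (comm_b8_ac m).symm
    · exact absurd (hxy 0 (by rw [hx]; exact zero_mem_alph_ac m)
        0 (by rw [hy]; exact zero_mem_alph_ac n)) not_theta8_zero_zero)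

/-! #### The prefix code `n ↦ false :: true^n` -/

def enc (n : ℕ) : List Bool := false :: List.replicate n true

theorem rep_aux : ∀ n m (r1 r2 : List Bool), r1.head? ≠ some true → r2.head? ≠ some true →
    List.replicate n true ++ r1 = List.replicate m true ++ r2 → n = m ∧ r1 = r2 := by
  intro n
  induction n with
  | zero =>
    intro m r1 r2 h1 h2 h
    cases m with
    | zero => exact ⟨rfl, by simpa using h⟩
    | succ k =>
      exfalso
      simp only [List.replicate_succ, List.replicate_zero, List.nil_append,
        List.cons_append] at h
      exact h1 (by rw [h]; rfl)
  | succ k ih =>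
    intro m r1 r2 h1 h2 h
    cases m with
    | zero =>
      exfalso
      simp only [List.replicate_succ, List.replicate_zero, List.nil_append,
        List.cons_append] at h
      exact h2 (by rw [← h]; rfl)
    | succ j =>
      rw [List.replicate_succ, List.replicate_succ, List.cons_append, List.cons_append] at h
      simp only [List.cons.injEq, true_and] at h
      obtain ⟨h3, h4⟩ := ih j r1 r2 h1 h2 h
      exact ⟨by omega, h4⟩

theorem encJ_head (l : List ℕ) : ((l.map enc).flatten).head? ≠ some true := by
  cases l with
  | nil => simp
  | cons n t => simp [enc]

theorem encJ_inj : ∀ l1 l2 : List ℕ, (l1.map enc).flatten = (l2.map enc).flatten → l1 = l2 := by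
  intro l1
  induction l1 with
  | nil =>
    intro l2 h
    cases l2 with
    | nil => rfl
    | cons m s => exfalso; simp [enc] at h
  | cons n t ih =>
    intro l2 h
    cases l2 with
    | nil => exfalso; simp [enc] at h
    | cons m s =>
      simp only [List.map_cons, List.flatten_cons, enc, List.cons_append, List.cons.injEq,
        true_and] at h
      obtain ⟨h1, h2⟩ := rep_aux n m _ _ (encJ_head t) (encJ_head s) h
      rw [h1, ih s h2]

def mu0 : FreeMonoid ℕ →* FreeMonoid Bool :=
  FreeMonoid.lift (fun n => FreeMonoid.ofList (enc n))

theorem mu0_toList (l : List ℕ) :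
    FreeMonoid.toList (mu0 (FreeMonoid.ofList l)) = (l.map enc).flatten := by
  induction l with
  | nil => simp [mu0, FreeMonoid.lift_apply]
  | cons x t ih =>
    rw [FreeMonoid.ofList_cons, map_mul,
      show mu0 (FreeMonoid.of x) = FreeMonoid.ofList (enc x) from rfl,
      FreeMonoid.toList_mul, ih, FreeMonoid.toList_ofList]
    simp

theorem mu0_inj : Function.Injective mu0 := by
  intro L1 L2 h
  have h2 : ((FreeMonoid.toList L1).map enc).flatten = ((FreeMonoid.toList L2).map enc).flatten := by
    rw [← mu0_toList, ← mu0_toList, FreeMonoid.ofList_toList, FreeMonoid.ofList_toList, h]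
  have h3 := encJ_inj _ _ h2
  rw [← FreeMonoid.ofList_toList L1, ← FreeMonoid.ofList_toList L2, h3]

def mu : FreeMonoid ℕ × Multiplicative ℕ →* M8 :=
  mu0.prodMap (MonoidHom.id (Multiplicative ℕ))

theorem mu_inj : Function.Injective mu := by
  rw [show ⇑mu = Prod.map ⇑mu0 id from MonoidHom.coe_prodMap _ _]
  exact Function.Injective.prodMap mu0_inj Function.injective_id

/-! #### Encoding the generators -/

def encX (x : X8) : FreeMonoid ℕ × Multiplicative ℕ :=
  if (phiA (x : Trace (Fin 3) theta8)).2 = 1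
  then (FreeMonoid.of ((FreeMonoid.toList (phiA (x : Trace (Fin 3) theta8)).1).length - 1), 1)
  else (1, (phiA (x : Trace (Fin 3) theta8)).2)

theorem encX_b {x : X8} (hx : (x : Trace (Fin 3) theta8) = b8) :
    encX x = (1, Multiplicative.ofAdd 1) := by
  unfold encX
  rw [hx, phiA_b]
  norm_num

theorem encX_ac {x : X8} {n : ℕ} (hx : (x : Trace (Fin 3) theta8) = ac n) :
    encX x = (FreeMonoid.of n, 1) := by
  unfold encX
  rw [hx, phiA_ac]
  simp

def g8 : Trace X8 tX8 →* FreeMonoid ℕ × Multiplicative ℕ :=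
  tlift tX8 encX (by
    intro x y hxy
    rcases mem_cases x.2 with hx | ⟨m, hx⟩ <;> rcases mem_cases y.2 with hy | ⟨n, hy⟩
    · exact absurd (hxy 1 (by rw [hx]; exact one_mem_alph_b)
        1 (by rw [hy]; exact one_mem_alph_b)) not_theta8_one_one
    · rw [encX_b hx, encX_ac hy]; simp [Prod.ext_iff]
    · rw [encX_ac hx, encX_b hy]; simp [Prod.ext_iff]
    · exact absurd (hxy 0 (by rw [hx]; exact zero_mem_alph_ac m)
        0 (by rw [hy]; exact zero_mem_alph_ac n)) not_theta8_zero_zero)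

/-! #### The retraction -/

def xb : X8 := ⟨b8, b8_mem⟩

def xa (n : ℕ) : X8 := ⟨ac n, ac_mem n⟩

def psi0 : FreeMonoid ℕ →* Trace X8 tX8 :=
  FreeMonoid.lift (fun n => trOf tX8 (xa n))

theorem comm_xb_xa (n : ℕ) : Commute (trOf tX8 xb) (trOf tX8 (xa n)) :=
  comm_of (thetaX_b_ac n)

theorem comm_xb_psi0 (L : FreeMonoid ℕ) : Commute (trOf tX8 xb) (psi0 L) := by
  induction L using FreeMonoid.recOn with
  | one => rw [map_one]; exact Commute.one_right _
  | of_mul x xs ihx =>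
    rw [map_mul, show psi0 (FreeMonoid.of x) = trOf tX8 (xa x) from rfl]
    exact (comm_xb_xa x).mul_right ihx

def psi : FreeMonoid ℕ × Multiplicative ℕ →* Trace X8 tX8 where
  toFun p := psi0 p.1 * (trOf tX8 xb) ^ (Multiplicative.toAdd p.2)
  map_one' := by simp
  map_mul' p q := by
    simp only [Prod.fst_mul, Prod.snd_mul, map_mul, toAdd_mul, pow_add]
    exact (((comm_xb_psi0 q.1).pow_left (Multiplicative.toAdd p.2)).mul_mul_mul_comm _ _).symm

theorem psi_apply (p : FreeMonoid ℕ × Multiplicative ℕ) :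
    psi p = psi0 p.1 * (trOf tX8 xb) ^ (Multiplicative.toAdd p.2) := rfl

theorem psi_g : psi.comp g8 = MonoidHom.id _ := by
  apply hom_ext
  intro x
  rw [MonoidHom.comp_apply, MonoidHom.id_apply,
    show g8 (trOf tX8 x) = encX x from tlift_of _ _ _ x]
  rcases mem_cases x.2 with hx | ⟨n, hx⟩
  · rw [encX_b hx, psi_apply]
    simp only [map_one, one_mul, toAdd_ofAdd, pow_one]
    rw [show x = xb from Subtype.ext hx]
  · rw [encX_ac hx, psi_apply]
    simp only [toAdd_one, pow_zero, mul_one,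
      show psi0 (FreeMonoid.of n) = trOf tX8 (xa n) from rfl]
    rw [show x = xa n from Subtype.ext hx]

theorem mu_g : mu.comp g8 = phiA.comp f8 := by
  apply hom_ext
  intro x
  rw [MonoidHom.comp_apply, MonoidHom.comp_apply,
    show g8 (trOf tX8 x) = encX x from tlift_of _ _ _ x,
    show f8 (trOf tX8 x) = (x : Trace (Fin 3) theta8) from tlift_of _ _ _ x]
  rcases mem_cases x.2 with hx | ⟨n, hx⟩
  · rw [encX_b hx, hx, phiA_b]
    simp [mu]
  · rw [encX_ac hx, hx, phiA_ac]
    simp [mu, mu0, enc]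

theorem f8_inj : Function.Injective f8 := by
  intro u v huv
  have hu := DFunLike.congr_fun mu_g u
  have hv := DFunLike.congr_fun mu_g v
  rw [MonoidHom.comp_apply, MonoidHom.comp_apply] at hu hv
  have h2 : g8 u = g8 v := mu_inj (by rw [hu, hv, huv])
  have h3 := DFunLike.congr_fun psi_g u
  have h4 := DFunLike.congr_fun psi_g v
  rw [MonoidHom.comp_apply, MonoidHom.id_apply] at h3 h4
  rw [← h3, ← h4, h2]

theorem pccode : IsPCCode theta8 (beta theta8 {2}) :=
  ⟨f8, fun x => tlift_of _ _ _ x, f8_inj⟩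

end Stmt8

open PCM in
/-- with `θ : a-b-c` and `B = {c}`, `B` is a TFSA,
`β_Z(B) = {b} ∪ {a·cⁿ : n ≥ 0}`, `b` commutes with every `a·cⁿ` (and these are the
only commutations), and `⟨β_Z(B)⟩` is free partially commutative. -/
theorem stmt_8 :
    IsTFSA theta8 {2} ∧
    beta theta8 {2} =
      {trOf theta8 1} ∪ {t | ∃ n : ℕ, t = trOf theta8 0 * (trOf theta8 2) ^ n} ∧
    (∀ x ∈ beta theta8 {2}, ∀ y ∈ beta theta8 {2},
      ((∀ a ∈ Alph theta8 x, ∀ b ∈ Alph theta8 y, theta8 a b) ↔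
        ((x = trOf theta8 1 ∧ ∃ n : ℕ, y = trOf theta8 0 * (trOf theta8 2) ^ n) ∨
         (y = trOf theta8 1 ∧ ∃ n : ℕ, x = trOf theta8 0 * (trOf theta8 2) ^ n)))) ∧
    IsPCCode theta8 (beta theta8 {2}) :=
  ⟨Stmt8.tfsa, Stmt8.hbeta, Stmt8.thetaX_iff, Stmt8.pccode⟩
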